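/- arXiv:1703.07447 — 4 statements merged into one kernel-verified Lean document; each statement's English description precedes it below -/
import Mathlib

section
/- Suppose λ ∈ ℂ with Re λ ≤ 0, λ ≠ 0, and there exist a real number d with d ≥ β > 0 and a real number s with 0 ≤ s ≤ d/δ (δ > 0) such that λ² + λd + s = 0. Then |λ|² ≤ (1/δ)·β·|Re λ|/(β - |Re λ|) whenever |Re λ| < β; moreover if βδ > 4 then ||Re λ| - β/2|² ≥ (β/2)²(1 - 4/(βδ)). -/
set_option maxHeartbeats 1600000 in
/-- abstract quadratic-equation lemma underlying Theorem 6.1. -/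
theorem stmt_3 (β δ : ℝ) (hβ : 0 < β) (hδ : 0 < δ)
    (lam : ℂ) (hre : lam.re ≤ 0) (hne : lam ≠ 0)
    (d s : ℝ) (hd : β ≤ d) (hs0 : 0 ≤ s) (hsd : s ≤ d / δ)
    (heq : lam ^ 2 + lam * (d : ℂ) + (s : ℂ) = 0) :
    (|lam.re| < β →
      ‖lam‖ ^ 2 ≤ (1 / δ) * β * |lam.re| / (β - |lam.re|)) ∧
    (4 < β * δ →
      (β / 2) ^ 2 * (1 - 4 / (β * δ)) ≤ (|lam.re| - β / 2) ^ 2) := by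
  set x := lam.re with hx
  set y := lam.im with hy
  have h1 : x * x - y * y + x * d + s = 0 := by
    have h := congrArg Complex.re heq
    simp [pow_two, Complex.mul_re, Complex.mul_im] at h
    linarith
  have h2 : x * y + y * x + y * d = 0 := by
    have h := congrArg Complex.im heq
    simp [pow_two, Complex.mul_re, Complex.mul_im] at h
    linarith
  have habsx : |x| = -x := abs_of_nonpos hre
  have hsq : ‖lam‖ ^ 2 = x * x + y * y := by
    rw [Complex.sq_norm, Complex.normSq_apply]
  have hδs : δ * s ≤ d := by
    rw [le_div_iff₀ hδ] at hsd; linarith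
  constructor
  · intro hlt
    rw [habsx] at hlt ⊢
    rw [hsq]
    rw [le_div_iff₀ (by linarith : (0:ℝ) < β - -x)]
    have : 1 / δ * β * -x = β * -x / δ := by ring
    rw [this, le_div_iff₀ hδ]
    by_cases hy0 : y = 0
    · rw [hy0] at h1 ⊢
      have hxne : x ≠ 0 := by
        intro hx0
        apply hne
        apply Complex.ext <;> simp [← hx, ← hy, hx0, hy0]
      have hxneg : x < 0 := lt_of_le_of_ne hre hxne
      have hs : s = -x * x - x * d := by linarith
      have hdpos : 0 < d := lt_of_lt_of_le hβ hd
      have k1 : δ * (-x) * (d + x) ≤ d := by nlinarith [hδs, hs]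
      have key : δ * (-x) * (β + x) * d ≤ β * d := by
        nlinarith [mul_le_mul_of_nonneg_left k1 hβ.le,
          mul_nonneg (mul_nonneg hδ.le (mul_self_nonneg x)) (sub_nonneg.mpr hd)]
      have key2 : δ * (-x) * (β + x) ≤ β := le_of_mul_le_mul_right key hdpos
      nlinarith [mul_le_mul_of_nonneg_left key2 (neg_nonneg.mpr hre)]
    · have hxd : x = -d / 2 := by
        have : y * (x + x + d) = 0 := by ring_nf; linarith [h2]
        rcases mul_eq_zero.mp this with h | h
        · exact absurd h hy0
        · linarith
      have hyy : y * y = s - d * d / 4 := by rw [hxd] at h1; nlinarith [h1]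
      have hlam2 : x * x + y * y = s := by rw [hxd]; rw [hyy]; ring
      rw [hlam2]
      rw [hxd] at hlt ⊢
      nlinarith [hδs, mul_pos hβ hδ]
  · intro h4
    have hy0 : y = 0 := by
      by_contra hy0
      have hxd : x = -d / 2 := by
        have : y * (x + x + d) = 0 := by ring_nf; linarith [h2]
        rcases mul_eq_zero.mp this with h | h
        · exact absurd h hy0
        · linarith
      have hyy : y * y = s - d * d / 4 := by rw [hxd] at h1; nlinarith [h1]
      have hypos : 0 < y * y := mul_self_pos.mpr hy0
      nlinarith [mul_le_mul_of_nonneg_left hd hδ.le]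
    rw [hy0] at h1
    have hxne : x ≠ 0 := by
      intro hx0
      apply hne
      apply Complex.ext <;> simp [← hx, ← hy, hx0, hy0]
    have hxneg : x < 0 := lt_of_le_of_ne hre hxne
    have hs : s = -x * x - x * d := by linarith
    -- key polynomial inequality
    have h5 : 0 ≤ δ * (x * x) + δ * β * x + β := by
      rcases le_or_gt (δ * x + 1) 0 with hc | hc
      · nlinarith [mul_nonneg (sub_nonneg.mpr hd) (neg_nonneg.mpr hc), hδs, hs]
      · nlinarith [mul_nonneg hδ.le (mul_self_nonneg x), mul_nonneg hβ.le hc.le]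
    have heqq : (β / 2) ^ 2 * (1 - 4 / (β * δ)) = β ^ 2 / 4 - β / δ := by
      have hβ0 : β ≠ 0 := ne_of_gt hβ
      have hδ0 : δ ≠ 0 := ne_of_gt hδ
      field_simp
      ring
    rw [heqq, habsx]
    have hinv : β / δ * δ = β := div_mul_cancel₀ β (ne_of_gt hδ)
    nlinarith [h5, hinv, hδ, mul_pos hβ hδ]
end

section
/- Let λ ∈ ℂ be a root of λ² + λw + s = 0 where w ∈ ℂ with Re w ≥ β > 0, |Im w| ≤ k·Re w for some k ≥ 0, and s ≥ 0. If 0 < |Re λ| < β/2 and Im λ ≠ 0, then |Im λ| ≤ k|Re λ|/(1 - (2/β)|Re λ|). -/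
/-!
The imaginary part of the quadratic gives `Im λ · (2 Re λ + Re w) = -Re λ · Im w`, so by
sectoriality `|Im λ| (Re w - 2|Re λ|) ≤ k |Re λ| Re w`. Since `u ↦ u / (u - 2|Re λ|)` decreases
on `u > 2|Re λ|`, `Re w` may then be replaced by its lower bound `β`.
-/

theorem Complex.im_mul_two_re_add_re_of_sq_add_mul_add_ofReal_eq_zero {z w : ℂ} {s : ℝ}
    (h : z ^ 2 + z * w + (s : ℂ) = 0) : z.im * (2 * z.re + w.re) = -(z.re * w.im) := by
  have him := congrArg Complex.im h
  simp only [pow_two, Complex.add_im, Complex.mul_im, Complex.ofReal_im, Complex.zero_im] at him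
  linear_combination him

lemma abs_mul_sub_two_abs_le {a b u v k : ℝ} (h : b * (2 * a + u) = -(a * v))
    (hv : |v| ≤ k * u) : |b| * (u - 2 * |a|) ≤ k * |a| * u := by
  have hsub : u - 2 * |a| ≤ |2 * a + u| := by
    linarith [neg_abs_le a, le_abs_self (2 * a + u)]
  calc |b| * (u - 2 * |a|) ≤ |b| * |2 * a + u| := by gcongr
    _ = |a| * |v| := by rw [← abs_mul, ← abs_mul, h, abs_neg]
    _ ≤ |a| * (k * u) := by gcongr
    _ = k * |a| * u := by ring

lemma mul_one_sub_div_le_of_mul_sub_le {c d e β u : ℝ} (hc : 0 ≤ c) (hd : 0 ≤ d) (hβ : 0 < β)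
    (hβu : β ≤ u) (h : c * (u - d) ≤ e * u) : c * (1 - d / β) ≤ e := by
  have hu : 0 < u := hβ.trans_le hβu
  calc c * (1 - d / β) ≤ c * (1 - d / u) := by gcongr
    _ = c * (u - d) / u := by field_simp
    _ ≤ e := by rwa [div_le_iff₀ hu]

theorem stmt_4_general (β k : ℝ) (hβ : 0 < β)
    (w : ℂ) (hw : β ≤ w.re) (hsec : |w.im| ≤ k * w.re)
    (s : ℝ)
    (lam : ℂ) (heq : lam ^ 2 + lam * w + (s : ℂ) = 0)
    (h2 : |lam.re| < β / 2) :
    |lam.im| ≤ k * |lam.re| / (1 - (2 / β) * |lam.re|) := by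
  have hbound : |lam.im| * (w.re - 2 * |lam.re|) ≤ k * |lam.re| * w.re :=
    abs_mul_sub_two_abs_le
      (Complex.im_mul_two_re_add_re_of_sq_add_mul_add_ofReal_eq_zero heq) hsec
  have hD : 0 < 1 - (2 / β) * |lam.re| := by
    rw [div_mul_eq_mul_div, sub_pos, div_lt_one hβ]
    linarith
  rw [le_div_iff₀ hD, div_mul_eq_mul_div]
  exact mul_one_sub_div_le_of_mul_sub_le (abs_nonneg _) (by positivity) hβ hw hbound

/-- algebraic core of Theorem 6.2 (i). -/
theorem stmt_4 (β k : ℝ) (hβ : 0 < β) (hk : 0 ≤ k)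
    (w : ℂ) (hw : β ≤ w.re) (hsec : |w.im| ≤ k * w.re)
    (s : ℝ) (hs : 0 ≤ s)
    (lam : ℂ) (heq : lam ^ 2 + lam * w + (s : ℂ) = 0)
    (h1 : 0 < |lam.re|) (h2 : |lam.re| < β / 2) (him : lam.im ≠ 0) :
    |lam.im| ≤ k * |lam.re| / (1 - (2 / β) * |lam.re|) :=
  stmt_4_general β k hβ w hw hsec s lam heq h2
end

section
/- Let λ ∈ ℂ be a root of λ² + λw + s² = 0 with Re λ < 0, Im λ ≠ 0, where w ∈ ℂ satisfies |Im w| ≤ k·Re w (k ≥ 0), Re w > 0, and 0 ≤ s² ≤ (1/δ)·Re w for some δ > 0. Then |λ|²·(|Im λ| - k|Re λ|) ≤ (2/δ)|Re λ||Im λ|. -/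
/-!
Multiplying the quadratic by `conj λ` gives `|λ|² w = -(|λ|² λ + s² conj λ)`, so with `a = -Re λ`,
`m = |λ|²` and `t = s²` one has `m Re w = a (m + t)` and `m Im w = Im λ (t - m)`. The sector
condition then bounds `|Im λ| (m - t)` by `k a (m + t)` and the bound on `s²` bounds `t m` by
`a (m + t) / δ`; adding the two eliminates `t` up to the positive factor `m + t`.
-/

open ComplexConjugate

namespace Complex

theorem normSq_mul_eq_of_sq_add_mul_add_eq_zero {z w : ℂ} {t : ℝ}
    (h : z ^ 2 + z * w + t = 0) : (normSq z : ℂ) * w = -(normSq z * z + t * conj z) := by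
  rw [normSq_eq_conj_mul_self]
  linear_combination conj z * h

theorem normSq_mul_re_of_sq_add_mul_add_eq_zero {z w : ℂ} {t : ℝ}
    (h : z ^ 2 + z * w + t = 0) : normSq z * w.re = -z.re * (normSq z + t) := by
  have := congrArg re (normSq_mul_eq_of_sq_add_mul_add_eq_zero h)
  simp only [re_ofReal_mul, neg_re, add_re, conj_re] at this
  linarith

theorem normSq_mul_im_of_sq_add_mul_add_eq_zero {z w : ℂ} {t : ℝ}
    (h : z ^ 2 + z * w + t = 0) : normSq z * w.im = z.im * (t - normSq z) := by
  have := congrArg im (normSq_mul_eq_of_sq_add_mul_add_eq_zero h)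
  simp only [im_ofReal_mul, neg_im, add_im, conj_im] at this
  linarith

end Complex

theorem mul_sub_le_of_mul_sub_le_of_mul_le {a b c k m t : ℝ} (hm : 0 ≤ m) (hb : 0 ≤ b)
    (hmt : 0 < m + t) (hsec : b * (m - t) ≤ k * a * (m + t))
    (hbound : t * m ≤ c * a * (m + t)) : m * (b - k * a) ≤ 2 * c * a * b := by
  refine le_of_mul_le_mul_right ?_ hmt
  calc m * (b - k * a) * (m + t) = b * m * (m + t) - m * (k * a * (m + t)) := by ring
    _ ≤ b * m * (m + t) - m * (b * (m - t)) := by gcongr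
    _ = 2 * b * (t * m) := by ring
    _ ≤ 2 * b * (c * a * (m + t)) := by gcongr
    _ = 2 * c * a * b * (m + t) := by ring

theorem stmt_8_general (k δ : ℝ)
    (w : ℂ) (hsec : |w.im| ≤ k * w.re)
    (s : ℝ) (hs : s ^ 2 ≤ (1 / δ) * w.re)
    (lam : ℂ) (heq : lam ^ 2 + lam * w + (s : ℂ) ^ 2 = 0)
    (hre : lam.re < 0) :
    ‖lam‖ ^ 2 * (|lam.im| - k * |lam.re|) ≤
      (2 / δ) * |lam.re| * |lam.im| := by
  have heq' : lam ^ 2 + lam * w + ((s ^ 2 : ℝ) : ℂ) = 0 := by exact_mod_cast heq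
  have hwre := Complex.normSq_mul_re_of_sq_add_mul_add_eq_zero heq'
  have hwim := Complex.normSq_mul_im_of_sq_add_mul_add_eq_zero heq'
  have hm : 0 < Complex.normSq lam :=
    Complex.normSq_pos.mpr fun h ↦ hre.ne (by simp [h])
  have hmt : 0 < Complex.normSq lam + s ^ 2 := by positivity
  rw [Complex.sq_norm, abs_of_neg hre, div_eq_mul_one_div 2 δ]
  apply mul_sub_le_of_mul_sub_le_of_mul_le hm.le (abs_nonneg _) hmt
  · calc |lam.im| * (Complex.normSq lam - s ^ 2)
        ≤ |lam.im * (s ^ 2 - Complex.normSq lam)| := by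
          rw [abs_mul, abs_sub_comm]; gcongr; exact le_abs_self _
      _ = Complex.normSq lam * |w.im| := by rw [← hwim, abs_mul, abs_of_pos hm]
      _ ≤ Complex.normSq lam * (k * w.re) := by gcongr
      _ = k * -lam.re * (Complex.normSq lam + s ^ 2) := by linear_combination k * hwre
  · calc s ^ 2 * Complex.normSq lam ≤ 1 / δ * w.re * Complex.normSq lam := by gcongr
      _ = 1 / δ * -lam.re * (Complex.normSq lam + s ^ 2) := by
          linear_combination 1 / δ * hwre

/-- algebraic core of Theorem 6.2 (iii). -/
theorem stmt_8 (k δ : ℝ) (hk : 0 ≤ k) (hδ : 0 < δ)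
    (w : ℂ) (hw : 0 < w.re) (hsec : |w.im| ≤ k * w.re)
    (s : ℝ) (hs : s ^ 2 ≤ (1 / δ) * w.re)
    (lam : ℂ) (heq : lam ^ 2 + lam * w + (s : ℂ) ^ 2 = 0)
    (hre : lam.re < 0) (him : lam.im ≠ 0) :
    ‖lam‖ ^ 2 * (|lam.im| - k * |lam.re|) ≤
      (2 / δ) * |lam.re| * |lam.im| :=
  stmt_8_general k δ w hsec s hs lam heq hre
end

section
/- For t ≥ 0, k ≥ 0, δ > 0, let h(t) be the largest nonnegative solution y of (y² + t²)(y - kt) = (2/δ)ty. Then kt ≤ h(t) ≤ min{ kt + 1/δ, kt/2 + sqrt((kt/2)² + 2t/δ) } ≤ kt + min{ 1/δ, sqrt(2t/δ) }. -/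
/-!
The right side of `(y² + t²)(y - kt) = (2/δ) t y` is nonnegative, so `y ≥ kt`.
Since `2ty ≤ y² + t²`, dividing by `y² + t²` gives `y - kt ≤ 1/δ`; dropping `t²` on the left
instead gives `y (y - kt) ≤ 2t/δ`, a quadratic inequality in `y` whose larger root is
`kt/2 + √((kt/2)² + 2t/δ)`. The last bound is `√(a² + b) ≤ a + √b` for `a ≥ 0`.
-/

section

variable {k δ t y : ℝ}

lemma mul_le_of_cubic (hδ : 0 < δ) (ht : 0 ≤ t) (hy : 0 ≤ y)
    (hroot : (y ^ 2 + t ^ 2) * (y - k * t) = (2 / δ) * t * y) : k * t ≤ y := by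
  by_contra! hlt
  have hrhs : 0 ≤ (2 / δ) * t * y := by positivity
  have hsum : y ^ 2 + t ^ 2 = 0 := by nlinarith [sq_nonneg y, sq_nonneg t]
  have hy0 : y = 0 := by nlinarith [sq_nonneg y, sq_nonneg t]
  have ht0 : t = 0 := by nlinarith [sq_nonneg y, sq_nonneg t]
  simp [hy0, ht0] at hlt

lemma le_add_inv_of_cubic (hδ : 0 < δ)
    (hroot : (y ^ 2 + t ^ 2) * (y - k * t) = (2 / δ) * t * y) : y ≤ k * t + 1 / δ := by
  rcases (add_nonneg (sq_nonneg y) (sq_nonneg t)).eq_or_lt with hsum | hsum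
  · have hy0 : y = 0 := by nlinarith [sq_nonneg y, sq_nonneg t]
    have ht0 : t = 0 := by nlinarith [sq_nonneg y, sq_nonneg t]
    simp [hy0, ht0, hδ.le]
  · have hamgm : (2 / δ) * t * y ≤ (y ^ 2 + t ^ 2) * (1 / δ) := by
      have : 2 * t * y ≤ y ^ 2 + t ^ 2 := by nlinarith [sq_nonneg (y - t)]
      calc (2 / δ) * t * y = (2 * t * y) * (1 / δ) := by ring
        _ ≤ (y ^ 2 + t ^ 2) * (1 / δ) := by gcongr
    have : y - k * t ≤ 1 / δ := le_of_mul_le_mul_left (hroot ▸ hamgm) hsum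
    linarith

lemma mul_sub_le_of_cubic (hδ : 0 < δ) (ht : 0 ≤ t) (hy : 0 ≤ y)
    (hroot : (y ^ 2 + t ^ 2) * (y - k * t) = (2 / δ) * t * y) :
    y * (y - k * t) ≤ 2 * t / δ := by
  have hge := sub_nonneg.2 (mul_le_of_cubic hδ ht hy hroot)
  rcases hy.eq_or_lt with rfl | hpos
  · simp only [zero_mul]; positivity
  · have : y * (y * (y - k * t)) ≤ y * (2 * t / δ) :=
      calc y * (y * (y - k * t)) ≤ (y ^ 2 + t ^ 2) * (y - k * t) := by
            nlinarith [mul_nonneg (sq_nonneg t) hge]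
        _ = y * (2 * t / δ) := by rw [hroot]; ring
    exact le_of_mul_le_mul_left this hpos

lemma le_half_add_sqrt_of_cubic (hδ : 0 < δ) (ht : 0 ≤ t) (hy : 0 ≤ y)
    (hroot : (y ^ 2 + t ^ 2) * (y - k * t) = (2 / δ) * t * y) :
    y ≤ k * t / 2 + √((k * t / 2) ^ 2 + 2 * t / δ) := by
  have hsq : (y - k * t / 2) ^ 2 ≤ (k * t / 2) ^ 2 + 2 * t / δ := by
    nlinarith [mul_sub_le_of_cubic hδ ht hy hroot]
  linarith [Real.le_sqrt_of_sq_le hsq]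

end

lemma Real.sqrt_sq_add_le {a b : ℝ} (ha : 0 ≤ a) (hb : 0 ≤ b) : √(a ^ 2 + b) ≤ a + √b := by
  rw [Real.sqrt_le_left (by positivity)]
  nlinarith [Real.sq_sqrt hb, Real.sqrt_nonneg b]

theorem stmt_9_general (k δ t : ℝ) (hk : 0 ≤ k) (hδ : 0 < δ) (ht : 0 ≤ t)
    (y : ℝ) (hy0 : 0 ≤ y)
    (hroot : (y ^ 2 + t ^ 2) * (y - k * t) = (2 / δ) * t * y) :
    k * t ≤ y ∧
    y ≤ min (k * t + 1 / δ)
        (k * t / 2 + Real.sqrt ((k * t / 2) ^ 2 + 2 * t / δ)) ∧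
    min (k * t + 1 / δ)
        (k * t / 2 + Real.sqrt ((k * t / 2) ^ 2 + 2 * t / δ)) ≤
      k * t + min (1 / δ) (Real.sqrt (2 * t / δ)) := by
  refine ⟨mul_le_of_cubic hδ ht hy0 hroot,
    le_min (le_add_inv_of_cubic hδ hroot) (le_half_add_sqrt_of_cubic hδ ht hy0 hroot), ?_⟩
  have hsqrt := Real.sqrt_sq_add_le (by positivity : 0 ≤ k * t / 2) (by positivity : 0 ≤ 2 * t / δ)
  rw [← min_add_add_left]
  exact min_le_min le_rfl (by linarith)

/-- bounds on the largest nonnegative solution of the cubic (6.6). -/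
theorem stmt_9 (k δ t : ℝ) (hk : 0 ≤ k) (hδ : 0 < δ) (ht : 0 ≤ t)
    (y : ℝ) (hy0 : 0 ≤ y)
    (hroot : (y ^ 2 + t ^ 2) * (y - k * t) = (2 / δ) * t * y)
    (hmax : ∀ y' : ℝ, 0 ≤ y' →
      (y' ^ 2 + t ^ 2) * (y' - k * t) = (2 / δ) * t * y' → y' ≤ y) :
    k * t ≤ y ∧
    y ≤ min (k * t + 1 / δ)
        (k * t / 2 + Real.sqrt ((k * t / 2) ^ 2 + 2 * t / δ)) ∧
    min (k * t + 1 / δ)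
        (k * t / 2 + Real.sqrt ((k * t / 2) ^ 2 + 2 * t / δ)) ≤
      k * t + min (1 / δ) (Real.sqrt (2 * t / δ)) :=
  stmt_9_general k δ t hk hδ ht y hy0 hroot
end
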